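/- Let Z be a d-dimensional lattice zonotope in R^d with generator set G_Z (pairwise non-collinear primitive-direction lattice segments based at the origin), contained after translation in [0,k(Z)]^d with k(Z) minimal. Let H = H_1(d,p) be the zonotope generated by all segments from 0 to primitive points of Z^d with 1-norm ≤ p and first nonzero coordinate positive. If the number of generators of H is at most that of Z, then k(H) ≤ k(Z); if strictly fewer, then k(H) < k(Z); and if both the generator counts and the k values are equal, then Z is a lattice translate of H. -/

import Mathlib

/-
The zonotope generated by integer vectors `G` fits, after a lattice translation, in the cube of
side `max_i ∑_{g ∈ G} |g_i|`, and in no smaller one; hence `d · k(Z)` is at least the sum of the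
1-norms of the generators of `Z`, with equality for `H₁(d,p)`, whose coordinate widths agree
because its generator set is invariant, up to signs, under permutations of the coordinates.

Sending each generator of `Z` to its primitive direction is injective (the generators are pairwise
non-collinear) and does not increase the 1-norm. Directions outside `H₁(d,p)` have 1-norm `> p`,
while generators of `H₁(d,p)` have 1-norm `≤ p`, so counting gives `∑_{H₁} ‖u‖₁ ≤ ∑_Z ‖g‖₁`,
strictly if `Z` has more generators. In the equality case every generator of `Z` is `±` a generator
of `H₁(d,p)`, and flipping the sign of a generator only translates a zonotope.
-/

open Filter Pointwise

def IsPrimitive {d : ℕ} (x : Fin d → ℤ) : Prop :=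
  x ≠ 0 ∧ Finset.univ.gcd x = 1

def FirstNonzeroPos {d : ℕ} (x : Fin d → ℤ) : Prop :=
  ∃ i, 0 < x i ∧ ∀ j, j < i → x j = 0

def norm1 {d : ℕ} (x : Fin d → ℤ) : ℕ := ∑ i, (x i).natAbs

noncomputable def zetaR (d : ℕ) : ℝ := ∑' n : ℕ, (1 : ℝ) / (n + 1) ^ d

noncomputable def primCount (d p : ℕ) : ℕ :=
  Nat.card {x : Fin d → ℤ // IsPrimitive x ∧ norm1 x ≤ p ∧ FirstNonzeroPos x}

noncomputable def zonotope {d : ℕ} (G : Finset (Fin d → ℝ)) : Set (Fin d → ℝ) :=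
  ∑ g ∈ G, segment ℝ 0 g

noncomputable def polytopeGraph {d : ℕ} (P : Set (Fin d → ℝ)) :
    SimpleGraph (Set.extremePoints ℝ P) where
  Adj u v := u ≠ v ∧ IsExtreme ℝ P (segment ℝ u.1 v.1)
  symm := by
    refine ⟨?_⟩
    intro u v h
    exact ⟨Ne.symm h.1, by rw [segment_symm]; exact h.2⟩
  loopless := by refine ⟨?_⟩; intro u h; exact h.1 rfl

noncomputable def graphDiam {d : ℕ} (P : Set (Fin d → ℝ)) : ℕ :=
  sSup {n | ∃ u v, (polytopeGraph P).dist u v = n}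

noncomputable def cube (d k : ℕ) : Set (Fin d → ℝ) :=
  {x | ∀ i, 0 ≤ x i ∧ x i ≤ k}

noncomputable def kOf {d : ℕ} (P : Set (Fin d → ℝ)) : ℕ :=
  sInf {k | ∃ t : Fin d → ℤ, ((fun i => (t i : ℝ)) +ᵥ P) ⊆ cube d k}

noncomputable def H1 (d p : ℕ) : Set (Fin d → ℝ) :=
  ∑ᶠ x ∈ {x : Fin d → ℤ | IsPrimitive x ∧ norm1 x ≤ p ∧ FirstNonzeroPos x},
    segment ℝ 0 (fun i => (x i : ℝ))

section InjectionCount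

open Finset

variable {α β : Type*} [DecidableEq α] {S : Finset α} {T : Finset β} {φ : β → α}
  {w : α → ℕ} {v : β → ℕ} {p : ℕ}

theorem card_le_card_add_card_filter_notMem (hφ : Set.InjOn φ T) :
    #T ≤ #S + #{b ∈ T | φ b ∉ S} := by
  have hA : #{b ∈ T | φ b ∈ S} ≤ #S :=
    card_le_card_of_injOn φ (fun b hb => (mem_filter.mp hb).2)
      (hφ.mono (coe_subset.mpr (filter_subset _ _)))
  have := card_filter_add_card_filter_not (s := T) (fun b => φ b ∈ S)
  omega

/-- The elements of `S` hit by `φ` are paid for by their preimages, each of the others costs at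
most `p`, and each element of `T` sent outside `S` brings in more than `p`. -/
theorem sum_add_mul_card_add_card_filter_notMem_le (hφ : Set.InjOn φ T) (hS : ∀ a ∈ S, w a ≤ p)
    (hwv : ∀ b ∈ T, w (φ b) ≤ v b) (hout : ∀ b ∈ T, φ b ∉ S → p < v b) :
    ∑ a ∈ S, w a + p * #T + #{b ∈ T | φ b ∉ S} ≤ ∑ b ∈ T, v b + p * #S := by
  set A := {b ∈ T | φ b ∈ S}
  set B := {b ∈ T | φ b ∉ S}
  have hAS : A.image φ ⊆ S := image_subset_iff.mpr fun b hb => (mem_filter.mp hb).2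
  have hAinj : Set.InjOn φ A := hφ.mono (coe_subset.mpr (filter_subset _ _))
  have hsplitS : ∑ a ∈ S, w a + p * #A ≤ ∑ b ∈ A, v b + p * #S := by
    have hrest : ∑ a ∈ S \ A.image φ, w a ≤ #(S \ A.image φ) * p := by
      simpa using sum_le_card_nsmul _ w p fun a ha => hS a (mem_sdiff.mp ha).1
    have hcard : #(S \ A.image φ) + #A = #S := by
      rw [← card_image_of_injOn hAinj]; exact card_sdiff_add_card_eq_card hAS
    have hA : ∑ b ∈ A, w (φ b) ≤ ∑ b ∈ A, v b :=
      sum_le_sum fun b hb => hwv b (mem_filter.mp hb).1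
    rw [← sum_sdiff hAS, sum_image hAinj, ← hcard]
    nlinarith
  have hB : #B * (p + 1) ≤ ∑ b ∈ B, v b := by
    simpa using card_nsmul_le_sum B v (p + 1) fun b hb =>
      hout b (mem_filter.mp hb).1 (mem_filter.mp hb).2
  have hcardT : #A + #B = #T := card_filter_add_card_filter_not _
  have hsumT : ∑ b ∈ A, v b + ∑ b ∈ B, v b = ∑ b ∈ T, v b := sum_filter_add_sum_filter_not _ _ _
  rw [← hcardT, ← hsumT]
  nlinarith

theorem sum_le_sum_of_card_le_of_injOn (hφ : Set.InjOn φ T) (hS : ∀ a ∈ S, w a ≤ p)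
    (hwv : ∀ b ∈ T, w (φ b) ≤ v b) (hout : ∀ b ∈ T, φ b ∉ S → p < v b)
    (hcard : #S ≤ #T) : ∑ a ∈ S, w a ≤ ∑ b ∈ T, v b := by
  have := sum_add_mul_card_add_card_filter_notMem_le hφ hS hwv hout
  have : p * #S ≤ p * #T := Nat.mul_le_mul_left p hcard
  omega

theorem sum_lt_sum_of_card_lt_of_injOn (hφ : Set.InjOn φ T) (hS : ∀ a ∈ S, w a ≤ p)
    (hwv : ∀ b ∈ T, w (φ b) ≤ v b) (hout : ∀ b ∈ T, φ b ∉ S → p < v b)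
    (hcard : #S < #T) : ∑ a ∈ S, w a < ∑ b ∈ T, v b := by
  have := sum_add_mul_card_add_card_filter_notMem_le hφ hS hwv hout
  have := card_le_card_add_card_filter_notMem (S := S) hφ
  have : p * #S ≤ p * #T := Nat.mul_le_mul_left p hcard.le
  omega

theorem image_eq_and_eq_of_card_eq_of_sum_le (hφ : Set.InjOn φ T) (hS : ∀ a ∈ S, w a ≤ p)
    (hwv : ∀ b ∈ T, w (φ b) ≤ v b) (hout : ∀ b ∈ T, φ b ∉ S → p < v b)
    (hcard : #S = #T) (hsum : ∑ b ∈ T, v b ≤ ∑ a ∈ S, w a) :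
    T.image φ = S ∧ ∀ b ∈ T, w (φ b) = v b := by
  have hkey := sum_add_mul_card_add_card_filter_notMem_le hφ hS hwv hout
  have hmaps : ∀ b ∈ T, φ b ∈ S := by
    have hB : #{b ∈ T | φ b ∉ S} = 0 := by rw [hcard] at hkey; omega
    simpa [filter_eq_empty_iff] using hB
  have himage : T.image φ = S :=
    eq_of_subset_of_card_le (image_subset_iff.mpr hmaps) (by rw [card_image_of_injOn hφ]; omega)
  refine ⟨himage, (sum_eq_sum_iff_of_le hwv).mp (le_antisymm (sum_le_sum hwv) ?_)⟩
  rwa [← sum_image (f := w) hφ, himage]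

end InjectionCount

lemma segment_zero_neg {𝕜 E : Type*} [Ring 𝕜] [PartialOrder 𝕜] [IsOrderedRing 𝕜] [AddCommGroup E]
    [Module 𝕜 E] (v : E) : segment 𝕜 0 (-v) = -v +ᵥ segment 𝕜 0 v := by
  rw [vadd_segment, vadd_eq_add, vadd_eq_add, add_zero, neg_add_cancel, segment_symm]

lemma Finset.sum_vadd_set {ι M : Type*} [AddCommMonoid M] (s : Finset ι) (a : ι → M)
    (S : ι → Set M) : ∑ i ∈ s, (a i +ᵥ S i) = (∑ i ∈ s, a i) +ᵥ ∑ i ∈ s, S i := by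
  have hsingleton : ∀ (b : M) (B : Set M), b +ᵥ B = {b} + B := fun _ _ => Set.singleton_add.symm
  simp_rw [hsingleton, sum_add_distrib, Set.finsetSum_singleton]

section LatticeZonotopes

open Finset

variable {d : ℕ}

def castVec : (Fin d → ℤ) →+ (Fin d → ℝ) := (Int.castAddHom ℝ).compLeft (Fin d)

@[simp] lemma castVec_apply (g : Fin d → ℤ) (i : Fin d) : castVec g i = g i := rfl

lemma castVec_injective : Function.Injective (castVec (d := d)) :=
  fun _ _ h => funext fun i => by simpa using congrFun h i

noncomputable def latticeZonotope (G : Finset (Fin d → ℤ)) : Set (Fin d → ℝ) :=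
  ∑ g ∈ G, segment ℝ 0 (castVec g)

lemma zonotope_image_castVec (G : Finset (Fin d → ℤ)) :
    zonotope (G.image fun g i => (g i : ℝ)) = latticeZonotope G :=
  sum_image fun _ _ _ _ h => castVec_injective h

def width (G : Finset (Fin d → ℤ)) (i : Fin d) : ℕ := ∑ g ∈ G, (g i).natAbs

lemma sum_norm1_eq_sum_width (G : Finset (Fin d → ℤ)) :
    ∑ g ∈ G, norm1 g = ∑ i, width G i :=
  sum_comm

lemma kOf_castVec_vadd (a : Fin d → ℤ) (P : Set (Fin d → ℝ)) :
    kOf (castVec a +ᵥ P) = kOf P := by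
  have hshift : ∀ t : Fin d → ℤ, castVec t +ᵥ (castVec a +ᵥ P) = castVec (t + a) +ᵥ P := by
    intro t; rw [vadd_vadd, map_add]
  unfold kOf
  congr 1
  ext k
  refine ⟨fun ⟨t, ht⟩ => ⟨t + a, ?_⟩, fun ⟨t, ht⟩ => ⟨t - a, ?_⟩⟩
  · change castVec (t + a) +ᵥ P ⊆ _
    rw [← hshift]; exact ht
  · change castVec (t - a) +ᵥ (castVec a +ᵥ P) ⊆ _
    rw [hshift, sub_add_cancel]; exact ht

lemma kOf_eq_sup_of_coord_range {P : Set (Fin d → ℝ)} (lo : Fin d → ℤ) (w : Fin d → ℕ)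
    (hbound : ∀ x ∈ P, ∀ i, (lo i : ℝ) ≤ x i ∧ x i ≤ lo i + w i)
    (hlo : ∀ i, ∃ x ∈ P, x i = lo i) (hhi : ∀ i, ∃ x ∈ P, x i = lo i + w i) :
    kOf P = univ.sup w := by
  have hfit : univ.sup w ∈ {k | ∃ t : Fin d → ℤ, ((fun i => (t i : ℝ)) +ᵥ P) ⊆ cube d k} := by
    refine ⟨-lo, ?_⟩
    rintro _ ⟨x, hx, rfl⟩ i
    have hwi : (w i : ℝ) ≤ univ.sup w := by exact_mod_cast le_sup (mem_univ i)
    have := hbound x hx i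
    simp only [vadd_eq_add, Pi.add_apply, Pi.neg_apply, Int.cast_neg]
    constructor <;> linarith
  refine le_antisymm (Nat.sInf_le hfit) (Finset.sup_le fun i _ => ?_)
  obtain ⟨t, ht⟩ := Nat.sInf_mem ⟨_, hfit⟩
  obtain ⟨x, hx, hxi⟩ := hlo i
  obtain ⟨y, hy, hyi⟩ := hhi i
  have h0 := (ht ⟨x, hx, rfl⟩ i).1
  have hk := (ht ⟨y, hy, rfl⟩ i).2
  simp only [vadd_eq_add, Pi.add_apply, hxi, hyi] at h0 hk
  have : (w i : ℝ) ≤ kOf P := by unfold kOf; linarith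
  exact_mod_cast this

lemma apply_mem_uIcc_of_mem_segment {v y : Fin d → ℝ} (hy : y ∈ segment ℝ 0 v) (i : Fin d) :
    y i ∈ Set.uIcc 0 (v i) := by
  obtain ⟨a, b, ha, hb, hab, rfl⟩ := hy
  rw [← segment_eq_uIcc]
  exact ⟨a, b, ha, hb, hab, by simp⟩

lemma apply_mem_Icc_of_mem_latticeZonotope {G : Finset (Fin d → ℤ)} {x : Fin d → ℝ}
    (hx : x ∈ latticeZonotope G) (i : Fin d) :
    ∑ g ∈ G, min (g i : ℝ) 0 ≤ x i ∧ x i ≤ ∑ g ∈ G, max (g i : ℝ) 0 := by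
  obtain ⟨f, hf, rfl⟩ := (Set.mem_finsetSum _ _ _).mp hx
  have hfi : ∀ g ∈ G, min (g i : ℝ) 0 ≤ f g i ∧ f g i ≤ max (g i : ℝ) 0 := fun g hg => by
    have := apply_mem_uIcc_of_mem_segment (hf hg) i
    rw [Set.uIcc, Set.mem_Icc, castVec_apply] at this
    exact ⟨(min_comm _ _).trans_le this.1, this.2.trans (max_comm _ _).le⟩
  simp only [Finset.sum_apply]
  exact ⟨sum_le_sum fun g hg => (hfi g hg).1, sum_le_sum fun g hg => (hfi g hg).2⟩

lemma sum_ite_mem_latticeZonotope (G : Finset (Fin d → ℤ)) (q : (Fin d → ℤ) → Prop)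
    [DecidablePred q] : ∑ g ∈ G, (if q g then castVec g else 0) ∈ latticeZonotope G :=
  Set.finsetSum_mem_finsetSum _ _ _ fun g _ => by
    split_ifs
    exacts [right_mem_segment _ _ _, left_mem_segment _ _ _]

lemma kOf_latticeZonotope (G : Finset (Fin d → ℤ)) :
    kOf (latticeZonotope G) = univ.sup (width G) := by
  have hwidth : ∀ i, ∑ g ∈ G, max (g i : ℝ) 0 = ∑ g ∈ G, min (g i : ℝ) 0 + width G i := by
    intro i
    simp only [width, Nat.cast_sum, Nat.cast_natAbs, Int.cast_abs, ← sum_add_distrib]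
    refine sum_congr rfl fun g _ => ?_
    rw [← sub_zero (g i : ℝ), ← max_sub_min_eq_abs', sub_zero]
    ring
  refine kOf_eq_sup_of_coord_range (fun i => ∑ g ∈ G, min (g i) 0) (width G)
    (fun x hx i => ?_) (fun i => ⟨_, sum_ite_mem_latticeZonotope G (fun g => g i < 0), ?_⟩)
    (fun i => ⟨_, sum_ite_mem_latticeZonotope G (fun g => 0 < g i), ?_⟩)
  · push_cast
    rw [← hwidth]
    exact apply_mem_Icc_of_mem_latticeZonotope hx i
  · push_cast
    simp only [Finset.sum_apply]
    refine sum_congr rfl fun g _ => ?_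
    split_ifs with h
    · simp [h.le]
    · simp [not_lt.mp h]
  · push_cast
    simp only [Finset.sum_apply, ← hwidth]
    refine sum_congr rfl fun g _ => ?_
    split_ifs with h
    · simp [h.le]
    · simp [not_lt.mp h]

lemma sum_norm1_le_mul_kOf (G : Finset (Fin d → ℤ)) :
    ∑ g ∈ G, norm1 g ≤ d * kOf (latticeZonotope G) := by
  rw [kOf_latticeZonotope, sum_norm1_eq_sum_width]
  simpa using sum_le_card_nsmul univ (width G) _ fun i _ => le_sup (mem_univ i)

lemma mul_kOf_eq_sum_norm1_of_width_eq {G : Finset (Fin d → ℤ)}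
    (h : ∀ i j, width G i = width G j) :
    d * kOf (latticeZonotope G) = ∑ g ∈ G, norm1 g := by
  refine le_antisymm ?_ (sum_norm1_le_mul_kOf G)
  rw [kOf_latticeZonotope, sum_norm1_eq_sum_width]
  simpa using card_nsmul_le_sum univ (width G) _ fun i _ => Finset.sup_le fun j _ => (h j i).le

lemma exists_latticeZonotope_eq_vadd_image {G : Finset (Fin d → ℤ)}
    {φ : (Fin d → ℤ) → Fin d → ℤ} (hφ : Set.InjOn φ G) (h : ∀ g ∈ G, g = φ g ∨ g = -φ g) :
    ∃ s : Fin d → ℤ, latticeZonotope G = castVec s +ᵥ latticeZonotope (G.image φ) := by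
  have hseg : ∀ g ∈ G, ∃ s : Fin d → ℤ,
      segment ℝ 0 (castVec g) = castVec s +ᵥ segment ℝ 0 (castVec (φ g)) := by
    intro g hg
    rcases h g hg with e | e
    · exact ⟨0, by rw [map_zero, zero_vadd, ← e]⟩
    · have hneg : castVec g = -castVec (φ g) := by rw [← map_neg, ← e]
      exact ⟨g, by rw [hneg, segment_zero_neg]⟩
  choose! s hs using hseg
  refine ⟨∑ g ∈ G, s g, ?_⟩
  rw [latticeZonotope, latticeZonotope, sum_image hφ, sum_congr rfl hs, Finset.sum_vadd_set,
    map_sum]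

end LatticeZonotopes

section PrimitiveDirections

open Finset

variable {d : ℕ}

lemma norm1_eq_zero {u : Fin d → ℤ} : norm1 u = 0 ↔ u = 0 := by
  simp [norm1, sum_eq_zero_iff, funext_iff]

lemma norm1_smul (m : ℤ) (u : Fin d → ℤ) : norm1 (m • u) = m.natAbs * norm1 u := by
  simp [norm1, mul_sum, Int.natAbs_mul]

lemma norm1_neg (u : Fin d → ℤ) : norm1 (-u) = norm1 u := by
  simp [norm1]

lemma norm1_comp_perm (u : Fin d → ℤ) (σ : Equiv.Perm (Fin d)) : norm1 (u ∘ σ) = norm1 u :=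
  Equiv.sum_comp σ fun i => (u i).natAbs

lemma natAbs_le_norm1 (u : Fin d → ℤ) (i : Fin d) : (u i).natAbs ≤ norm1 u :=
  single_le_sum (f := fun i => (u i).natAbs) (fun _ _ => Nat.zero_le _) (mem_univ i)

lemma isPrimitive_iff_gcd_eq_one {u : Fin d → ℤ} : IsPrimitive u ↔ univ.gcd u = 1 := by
  refine ⟨And.right, fun h => ⟨fun hu => ?_, h⟩⟩
  simp [hu, gcd_eq_zero_iff.mpr] at h

lemma IsPrimitive.neg {u : Fin d → ℤ} (hu : IsPrimitive u) : IsPrimitive (-u) := by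
  rw [isPrimitive_iff_gcd_eq_one] at hu ⊢
  have : univ.gcd (fun i => -1 * u i) = univ.gcd u := by
    rw [Finset.gcd_mul_left, ← Int.abs_eq_normalize, abs_neg, abs_one, one_mul]
  rw [← hu, ← this]
  simp only [neg_one_mul]
  rfl

lemma IsPrimitive.comp_perm {u : Fin d → ℤ} (hu : IsPrimitive u) (σ : Equiv.Perm (Fin d)) :
    IsPrimitive (u ∘ σ) := by
  rw [isPrimitive_iff_gcd_eq_one] at hu ⊢
  rwa [← gcd_image, image_univ_equiv]

lemma FirstNonzeroPos.not_neg {u : Fin d → ℤ} (hu : FirstNonzeroPos u) :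
    ¬ FirstNonzeroPos (-u) := by
  rintro ⟨j, hj, hj0⟩
  obtain ⟨i, hi, hi0⟩ := hu
  simp only [Pi.neg_apply, neg_eq_zero, Left.neg_pos_iff] at hj hj0
  rcases lt_trichotomy i j with h | rfl | h
  · exact (hj0 i h ▸ hi).false
  · exact (hi.trans hj).false
  · exact (hi0 j h ▸ hj).false

lemma firstNonzeroPos_or_neg {u : Fin d → ℤ} (hu : u ≠ 0) :
    FirstNonzeroPos u ∨ FirstNonzeroPos (-u) := by
  obtain ⟨i, hi, hmin⟩ :=
    wellFounded_lt.has_min {i | u i ≠ 0} (Function.ne_iff.mp hu)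
  have hbefore : ∀ j < i, u j = 0 := fun j hj => not_not.mp fun h => hmin j h hj
  rcases lt_or_gt_of_ne hi with h | h
  · exact .inr ⟨i, by simpa using h, fun j hj => by simp [hbefore j hj]⟩
  · exact .inl ⟨i, h, hbefore⟩

open Classical in
noncomputable def signNormalize (u : Fin d → ℤ) : Fin d → ℤ :=
  if FirstNonzeroPos u then u else -u

lemma signNormalize_eq_or_eq_neg (u : Fin d → ℤ) :
    signNormalize u = u ∨ signNormalize u = -u := by
  unfold signNormalize; split_ifs <;> simp

lemma firstNonzeroPos_signNormalize {u : Fin d → ℤ} (hu : u ≠ 0) :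
    FirstNonzeroPos (signNormalize u) := by
  unfold signNormalize
  split_ifs with h
  exacts [h, (firstNonzeroPos_or_neg hu).resolve_left h]

lemma signNormalize_eq_of_eq_or_eq_neg {u v : Fin d → ℤ} (hv : FirstNonzeroPos v)
    (h : u = v ∨ u = -v) : signNormalize u = v := by
  rcases h with rfl | rfl
  · exact if_pos hv
  · rw [signNormalize, if_neg hv.not_neg, neg_neg]

lemma gcd_smul_div_gcd (g : Fin d → ℤ) : univ.gcd g • (fun i => g i / univ.gcd g) = g :=
  funext fun i => Int.mul_ediv_cancel' (gcd_dvd (mem_univ i))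

lemma isPrimitive_div_gcd {g : Fin d → ℤ} (hg : g ≠ 0) :
    IsPrimitive fun i => g i / univ.gcd g := by
  obtain ⟨i, hi⟩ := Function.ne_iff.mp hg
  exact isPrimitive_iff_gcd_eq_one.mpr (gcd_div_eq_one (mem_univ i) hi)

noncomputable def primDir (g : Fin d → ℤ) : Fin d → ℤ :=
  signNormalize fun i => g i / univ.gcd g

lemma isPrimitive_primDir {g : Fin d → ℤ} (hg : g ≠ 0) : IsPrimitive (primDir g) := by
  rcases signNormalize_eq_or_eq_neg (fun i => g i / univ.gcd g) with h | h <;>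
    rw [primDir, h]
  exacts [isPrimitive_div_gcd hg, (isPrimitive_div_gcd hg).neg]

lemma firstNonzeroPos_primDir {g : Fin d → ℤ} (hg : g ≠ 0) : FirstNonzeroPos (primDir g) :=
  firstNonzeroPos_signNormalize (isPrimitive_div_gcd hg).1

lemma exists_smul_primDir (g : Fin d → ℤ) : ∃ m : ℤ, g = m • primDir g := by
  rcases signNormalize_eq_or_eq_neg (fun i => g i / univ.gcd g) with h | h
  · exact ⟨univ.gcd g, by rw [primDir, h, gcd_smul_div_gcd]⟩
  · exact ⟨-univ.gcd g, by rw [primDir, h, neg_smul_neg, gcd_smul_div_gcd]⟩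

lemma exists_ne_zero_smul_primDir {g : Fin d → ℤ} (hg : g ≠ 0) :
    ∃ m : ℤ, m ≠ 0 ∧ g = m • primDir g := by
  obtain ⟨m, hm⟩ := exists_smul_primDir g
  exact ⟨m, by rintro rfl; exact hg (by rw [hm, zero_smul]), hm⟩

lemma norm1_primDir_le {g : Fin d → ℤ} (hg : g ≠ 0) : norm1 (primDir g) ≤ norm1 g := by
  obtain ⟨m, hm0, hm⟩ := exists_ne_zero_smul_primDir hg
  conv_rhs => rw [hm, norm1_smul]
  exact Nat.le_mul_of_pos_left _ (Int.natAbs_pos.mpr hm0)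

lemma eq_or_eq_neg_primDir_of_norm1_eq {g : Fin d → ℤ} (hg : g ≠ 0)
    (h : norm1 (primDir g) = norm1 g) : g = primDir g ∨ g = -primDir g := by
  obtain ⟨m, -, hm⟩ := exists_ne_zero_smul_primDir hg
  have hpos : 0 < norm1 (primDir g) :=
    Nat.pos_of_ne_zero fun h0 => (isPrimitive_primDir hg).1 (norm1_eq_zero.mp h0)
  have hm1 : m.natAbs = 1 := by
    refine Nat.eq_of_mul_eq_mul_right hpos ?_
    rw [← norm1_smul, ← hm, ← h, one_mul]
  rcases Int.natAbs_eq_iff.mp hm1 with h1 | h1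
  · exact .inl (by simpa [h1] using hm)
  · exact .inr (by simpa [h1] using hm)

lemma injOn_primDir {G : Finset (Fin d → ℤ)} (h0 : (0 : Fin d → ℤ) ∉ G)
    (hnc : (G : Set (Fin d → ℤ)).Pairwise fun g g' => ∀ c : ℝ, castVec g' ≠ c • castVec g) :
    Set.InjOn primDir (G : Set (Fin d → ℤ)) := by
  intro g hg g' hg' he
  by_contra hne
  have hg0 : g ≠ 0 := fun h => h0 (h ▸ hg)
  obtain ⟨m, hm0, hm⟩ := exists_ne_zero_smul_primDir hg0
  obtain ⟨m', hm'⟩ := exists_smul_primDir g'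
  apply hnc hg hg' hne (m' / m)
  have hm0' : (m : ℝ) ≠ 0 := by exact_mod_cast hm0
  funext i
  rw [hm, hm', ← he]
  simp only [castVec_apply, Pi.smul_apply, smul_eq_mul, Int.cast_mul]
  field_simp

end PrimitiveDirections

section PrimitiveZonotope

open Finset

variable {d : ℕ}

def primSet (d p : ℕ) : Set (Fin d → ℤ) :=
  {x | IsPrimitive x ∧ norm1 x ≤ p ∧ FirstNonzeroPos x}

lemma primSet_finite (d p : ℕ) : (primSet d p).Finite :=
  (Set.finite_Icc (-(p : Fin d → ℤ)) p).subset fun x hx =>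
    ⟨fun i => by have := (natAbs_le_norm1 x i).trans hx.2.1; simp; omega,
     fun i => by have := (natAbs_le_norm1 x i).trans hx.2.1; simp; omega⟩

noncomputable def primGens (d p : ℕ) : Finset (Fin d → ℤ) := (primSet_finite d p).toFinset

lemma mem_primGens {p : ℕ} {x : Fin d → ℤ} :
    x ∈ primGens d p ↔ IsPrimitive x ∧ norm1 x ≤ p ∧ FirstNonzeroPos x :=
  Set.Finite.mem_toFinset _

lemma primCount_eq_card_primGens (d p : ℕ) : primCount d p = #(primGens d p) :=
  Nat.card_eq_card_finite_toFinset _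

lemma H1_eq_latticeZonotope (d p : ℕ) : H1 d p = latticeZonotope (primGens d p) :=
  finsum_mem_eq_finite_toFinset_sum _ _

lemma signNormalize_comp_mem_primGens {p : ℕ} {u : Fin d → ℤ} (hu : u ∈ primGens d p)
    (σ : Equiv.Perm (Fin d)) : signNormalize (u ∘ σ) ∈ primGens d p := by
  obtain ⟨hprim, hnorm, -⟩ := mem_primGens.mp hu
  have hprimσ := hprim.comp_perm σ
  refine mem_primGens.mpr ⟨?_, ?_, firstNonzeroPos_signNormalize hprimσ.1⟩ <;>
    rcases signNormalize_eq_or_eq_neg (u ∘ σ) with h | h <;> rw [h]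
  exacts [hprimσ, hprimσ.neg, (norm1_comp_perm u σ).trans_le hnorm,
    (norm1_neg _).trans_le <| (norm1_comp_perm u σ).trans_le hnorm]

lemma signNormalize_comp_signNormalize_comp {u : Fin d → ℤ} (hu : FirstNonzeroPos u)
    (σ : Equiv.Perm (Fin d)) : signNormalize (signNormalize (u ∘ σ) ∘ σ.symm) = u := by
  apply signNormalize_eq_of_eq_or_eq_neg hu
  rcases signNormalize_eq_or_eq_neg (u ∘ σ) with h | h <;> rw [h]
  · exact .inl (funext fun i => by simp)
  · exact .inr (funext fun i => by simp)

/-- `u ↦ signNormalize (u ∘ σ)` permutes the generators of `H₁(d,p)`. -/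
lemma width_primGens_perm (p : ℕ) (σ : Equiv.Perm (Fin d)) (i : Fin d) :
    width (primGens d p) (σ i) = width (primGens d p) i := by
  refine sum_nbij' (fun u => signNormalize (u ∘ σ)) (fun u => signNormalize (u ∘ σ.symm))
    (fun u hu => signNormalize_comp_mem_primGens hu σ)
    (fun u hu => signNormalize_comp_mem_primGens hu σ.symm)
    (fun u hu => signNormalize_comp_signNormalize_comp (mem_primGens.mp hu).2.2 σ)
    (fun u hu => by
      simpa using signNormalize_comp_signNormalize_comp (mem_primGens.mp hu).2.2 σ.symm)
    (fun u _ => ?_)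
  rcases signNormalize_eq_or_eq_neg (u ∘ σ) with h | h <;> simp [h]

lemma width_primGens_eq (p : ℕ) (i j : Fin d) :
    width (primGens d p) i = width (primGens d p) j := by
  simpa using width_primGens_perm p (Equiv.swap i j) j

lemma mul_kOf_H1 (d p : ℕ) : d * kOf (H1 d p) = ∑ u ∈ primGens d p, norm1 u := by
  rw [H1_eq_latticeZonotope]
  exact mul_kOf_eq_sum_norm1_of_width_eq (width_primGens_eq p)

lemma lt_norm1_of_primDir_notMem {p : ℕ} {g : Fin d → ℤ} (hg : g ≠ 0)
    (h : primDir g ∉ primGens d p) : p < norm1 g :=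
  (not_le.mp fun hp => h (mem_primGens.mpr
    ⟨isPrimitive_primDir hg, hp, firstNonzeroPos_primDir hg⟩)).trans_le (norm1_primDir_le hg)

end PrimitiveZonotope

theorem stmt_16_general (d p : ℕ) (hd : 2 ≤ d)
    (GZ : Finset (Fin d → ℤ)) (hGZ0 : (0 : Fin d → ℤ) ∉ GZ)
    (hnc : (GZ : Set (Fin d → ℤ)).Pairwise fun g g' =>
      ∀ c : ℝ, (fun i => (g' i : ℝ)) ≠ c • fun i => (g i : ℝ))
    (Z : Set (Fin d → ℝ)) (t : Fin d → ℤ)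
    (hZ : Z = (fun i => (t i : ℝ)) +ᵥ zonotope (GZ.image fun g => fun i => (g i : ℝ))) :
    (primCount d p ≤ GZ.card → kOf (H1 d p) ≤ kOf Z) ∧
    (primCount d p < GZ.card → kOf (H1 d p) < kOf Z) ∧
    (primCount d p = GZ.card → kOf (H1 d p) = kOf Z →
      ∃ s : Fin d → ℤ, Z = (fun i => (s i : ℝ)) +ᵥ H1 d p) := by
  have hZ' : Z = castVec t +ᵥ latticeZonotope GZ := by rw [hZ, zonotope_image_castVec]; rfl
  have hkZ : ∑ g ∈ GZ, norm1 g ≤ d * kOf Z := by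
    rw [hZ', kOf_castVec_vadd]; exact sum_norm1_le_mul_kOf GZ
  have hkH := mul_kOf_H1 d p
  have hne : ∀ g ∈ GZ, g ≠ 0 := fun g hg h => hGZ0 (h ▸ hg)
  have hinj := injOn_primDir hGZ0 hnc
  have hS : ∀ u ∈ primGens d p, norm1 u ≤ p := fun u hu => (mem_primGens.mp hu).2.1
  have hle : ∀ g ∈ GZ, norm1 (primDir g) ≤ norm1 g := fun g hg => norm1_primDir_le (hne g hg)
  have hout : ∀ g ∈ GZ, primDir g ∉ primGens d p → p < norm1 g :=
    fun g hg => lt_norm1_of_primDir_notMem (hne g hg)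
  rw [primCount_eq_card_primGens]
  refine ⟨fun hcard => ?_, fun hcard => ?_, fun hcard hk => ?_⟩
  · have := sum_le_sum_of_card_le_of_injOn hinj hS hle hout hcard
    exact Nat.le_of_mul_le_mul_left (by omega) (by omega : 0 < d)
  · have := sum_lt_sum_of_card_lt_of_injOn hinj hS hle hout hcard
    exact Nat.lt_of_mul_lt_mul_left (a := d) (by omega)
  · obtain ⟨himage, hnorm⟩ := image_eq_and_eq_of_card_eq_of_sum_le hinj hS hle hout hcard
      (by rw [← hkH, hk]; exact hkZ)
    obtain ⟨s, hs⟩ := exists_latticeZonotope_eq_vadd_image hinj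
      fun g hg => eq_or_eq_neg_primDir_of_norm1_eq (hne g hg) (hnorm g hg)
    refine ⟨t + s, ?_⟩
    rw [hZ', hs, himage, ← H1_eq_latticeZonotope, vadd_vadd, ← map_add]
    rfl

/-- Comparison of a d-dimensional lattice zonotope Z with the primitive zonotope
H₁(d,p): if H₁(d,p) has at most as many generators as Z then k(H₁(d,p)) ≤ k(Z);
strictly fewer generators give a strict inequality; and equality of both generator
counts and k-values forces Z to be a lattice translate of H₁(d,p). -/
theorem stmt_16 (d p : ℕ) (hd : 2 ≤ d) (hp : 1 ≤ p)
    (GZ : Finset (Fin d → ℤ)) (hGZ0 : (0 : Fin d → ℤ) ∉ GZ)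
    (hnc : (GZ : Set (Fin d → ℤ)).Pairwise fun g g' =>
      ∀ c : ℝ, (fun i => (g' i : ℝ)) ≠ c • fun i => (g i : ℝ))
    (hdim : Submodule.span ℝ ((fun g : Fin d → ℤ => fun i => (g i : ℝ)) '' GZ) = ⊤)
    (Z : Set (Fin d → ℝ)) (t : Fin d → ℤ)
    (hZ : Z = (fun i => (t i : ℝ)) +ᵥ zonotope (GZ.image fun g => fun i => (g i : ℝ))) :
    (primCount d p ≤ GZ.card → kOf (H1 d p) ≤ kOf Z) ∧
    (primCount d p < GZ.card → kOf (H1 d p) < kOf Z) ∧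
    (primCount d p = GZ.card → kOf (H1 d p) = kOf Z →
      ∃ s : Fin d → ℤ, Z = (fun i => (s i : ℝ)) +ᵥ H1 d p) :=
  stmt_16_general d p hd GZ hGZ0 hnc Z t hZ
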